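/- arXiv:2404.12740 — 2 statements merged into one kernel-verified Lean document; each statement's English description precedes it below -/
import Mathlib

section
/- For every integer ℓ ≥ 1 and every vertex v ∈ V_n, the expected total excess connectivity weight of the ℓ-neighbourhood satisfies E[‖S_ℓ(v)‖_+] ≤ W_v·1{W_v > √(n·θ)} + W_v·(Γ_{2,n}+1)^{ℓ−1}·κ_{2,n}. -/
open MeasureTheory ProbabilityTheory Real
open scoped ENNReal

noncomputable section
open Classical

/-- The set of vertices at graph distance at most `ℓ` from `v`, for the graph with
adjacency relation `A` on `Fin n`. -/
def nbhd {n : ℕ} (A : Fin n → Fin n → Prop) : ℕ → Fin n → Set (Fin n)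
  | 0, v => {v}
  | ℓ + 1, v => nbhd A ℓ v ∪ {u | ∃ w ∈ nbhd A ℓ v, A w u}

/-- `f` is a path of length `ℓ` for the adjacency relation `A`: `ℓ+1` pairwise distinct
vertices, consecutive ones joined by an edge. -/
def IsPathOn {n : ℕ} (A : Fin n → Fin n → Prop) (ℓ : ℕ) (f : Fin (ℓ + 1) → Fin n) : Prop :=
  Function.Injective f ∧ ∀ i : Fin ℓ, A (f i.castSucc) (f i.succ)

/-- total `p`-connectivity weight `‖U‖_p` of a vertex set `U`. -/
def wnorm {n : ℕ} (W : Fin n → ℝ) (p : ℝ) (U : Set (Fin n)) : ℝ :=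
  ∑ u : Fin n, Set.indicator U (fun u => W u ^ p) u

/-- `Γ_{p,n}` -/
def Gam (n : ℕ) (θ : ℝ) (W : Fin n → ℝ) (p : ℝ) : ℝ :=
  (∑ u : Fin n, W u ^ p) / (n * θ)

/-- total excess connectivity weight `‖U‖₊` of a vertex set `U`. -/
def wplus (n : ℕ) (θ : ℝ) (W : Fin n → ℝ) (U : Set (Fin n)) : ℝ :=
  ∑ u : Fin n, Set.indicator U (fun u => if Real.sqrt (n * θ) < W u then W u else 0) u

/-- `κ_{p,n}` -/
def kap (n : ℕ) (θ : ℝ) (W : Fin n → ℝ) (p : ℝ) : ℝ :=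
  (∑ u : Fin n, if Real.sqrt (n * θ) < W u then W u ^ p else 0) / (n * θ)

/-! A vertex `u` lies in `S_ℓ(v)` only if a self-avoiding path of some length `k ≤ ℓ` joins
`v` to `u`. The edges of such a path are distinct, so by independence it is present with
probability at most `∏ W_a W_b / (nθ)` over its edges. Summing over paths (and then over all
walks) bounds `E‖S_ℓ(v)‖₊` by `∑_{k ≤ ℓ} (Mᵏ c)(v)`, where `M = W Wᵀ / (nθ)` has rank one and
`c = W 1{W > √(nθ)}`; rank one gives `M^{k+1} c = Γ_{2,n}ᵏ κ_{2,n} W`, and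
`∑_{k < ℓ} Γᵏ ≤ (Γ + 1)^{ℓ-1}`. -/

open Finset Matrix

namespace IsPathOn

variable {n : ℕ} {A : Fin n → Fin n → Prop} {k : ℕ} {f : Fin (k + 1) → Fin n}

theorem truncate (hf : IsPathOn A k f) (j : Fin (k + 1)) :
    IsPathOn A j (fun i => f (Fin.castLE j.isLt i)) :=
  ⟨hf.1.comp (Fin.castLE_injective _), fun i => hf.2 ⟨i, by omega⟩⟩

theorem snoc (hf : IsPathOn A k f) {u : Fin n} (hu : u ∉ Set.range f)
    (hA : A (f (Fin.last k)) u) : IsPathOn A (k + 1) (Fin.snoc f u) := by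
  refine ⟨Fin.snoc_injective_of_injective hf.1 hu, fun i => ?_⟩
  induction i using Fin.lastCases with
  | last => rwa [Fin.succ_last, Fin.snoc_last, Fin.snoc_castSucc]
  | cast i => rw [Fin.succ_castSucc, Fin.snoc_castSucc, Fin.snoc_castSucc]; exact hf.2 i

end IsPathOn

theorem exists_isPathOn_of_mem_nbhd {n : ℕ} {A : Fin n → Fin n → Prop} {ℓ : ℕ} {v u : Fin n}
    (hu : u ∈ nbhd A ℓ v) :
    ∃ k ≤ ℓ, ∃ f : Fin (k + 1) → Fin n, IsPathOn A k f ∧ f 0 = v ∧ f (Fin.last k) = u := by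
  induction ℓ generalizing u with
  | zero =>
    obtain rfl : u = v := hu
    exact ⟨0, le_rfl, fun _ => u, ⟨fun a b _ => Fin.ext (by omega), nofun⟩, rfl, rfl⟩
  | succ ℓ ih =>
    rcases hu with hu | ⟨w, hw, hwu⟩
    · obtain ⟨k, hk, hf⟩ := ih hu
      exact ⟨k, hk.trans ℓ.le_succ, hf⟩
    obtain ⟨k, hk, f, hf, hf0, hfw⟩ := ih hw
    by_cases hmem : u ∈ Set.range f
    · obtain ⟨j, rfl⟩ := hmem
      exact ⟨j, by omega, _, hf.truncate j, hf0, congrArg f (Fin.ext rfl)⟩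
    · refine ⟨k + 1, by omega, _, hf.snoc hmem (hfw ▸ hwu), ?_, Fin.snoc_last _ _⟩
      rw [← Fin.castSucc_zero, Fin.snoc_castSucc, hf0]

theorem measurableSet_mem_nbhd {Ω : Type*} [MeasurableSpace Ω] {n : ℕ}
    {A : Ω → Fin n → Fin n → Prop} (hA : ∀ a b, MeasurableSet {ω | A ω a b}) (ℓ : ℕ)
    (v u : Fin n) : MeasurableSet {ω | u ∈ nbhd (A ω) ℓ v} := by
  induction ℓ generalizing u with
  | zero => exact MeasurableSet.const _
  | succ ℓ ih =>
    have hset : {ω | u ∈ nbhd (A ω) (ℓ + 1) v}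
        = {ω | u ∈ nbhd (A ω) ℓ v} ∪ ⋃ w, {ω | w ∈ nbhd (A ω) ℓ v} ∩ {ω | A ω w u} := by
      ext; simp [nbhd]
    rw [hset]
    exact (ih u).union (.iUnion fun w => (ih w).inter (hA w u))

section Edges

variable {α : Type*} [LinearOrder α]

def orderedEdge (a b : α) (h : a ≠ b) : {p : α × α // p.1 < p.2} :=
  ⟨(min a b, max a b), min_lt_max.2 h⟩

theorem eq_and_eq_or_of_orderedEdge_eq {a b c d : α} {h : a ≠ b} {h' : c ≠ d}
    (he : orderedEdge a b h = orderedEdge c d h') : a = c ∧ b = d ∨ a = d ∧ b = c := by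
  simp only [orderedEdge, Subtype.mk.injEq, Prod.mk.injEq] at he
  rcases le_total a b with hab | hab <;> rcases le_total c d with hcd | hcd <;>
    simp_all

theorem apply_orderedEdge {β : Type*} {X : α → α → β} (hX : ∀ a b, X a b = X b a)
    (a b : α) (h : a ≠ b) : X (orderedEdge a b h).1.1 (orderedEdge a b h).1.2 = X a b := by
  rcases le_total a b with hab | hab <;> simp [orderedEdge, hab, hX b a]

end Edges

theorem measure_isPathOn_le {Ω : Type*} [MeasurableSpace Ω] (P : Measure Ω) {n : ℕ}
    {X : Fin n → Fin n → Ω → Bool} (hsymm : ∀ u v, X u v = X v u)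
    (hindep : iIndepFun (fun e : {p : Fin n × Fin n // p.1 < p.2} => X e.1.1 e.1.2) P)
    {M : Matrix (Fin n) (Fin n) ℝ} (hM : ∀ a b, 0 ≤ M a b)
    (hp : ∀ a b, a ≠ b → P {ω | X a b ω = true} ≤ ENNReal.ofReal (M a b))
    (k : ℕ) (f : Fin (k + 1) → Fin n) :
    P {ω | IsPathOn (fun a b => X a b ω = true) k f}
      ≤ ENNReal.ofReal (∏ i : Fin k, M (f i.castSucc) (f i.succ)) := by
  by_cases hf : Function.Injective f
  swap
  · simp [IsPathOn, hf]
  have hne (i : Fin k) : f i.castSucc ≠ f i.succ := hf.ne Fin.castSucc_lt_succ.ne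
  set e : Fin k → {p : Fin n × Fin n // p.1 < p.2} := fun i => orderedEdge _ _ (hne i)
  have hXe (i : Fin k) : X (e i).1.1 (e i).1.2 = X (f i.castSucc) (f i.succ) :=
    apply_orderedEdge hsymm _ _ (hne i)
  have he : Function.Injective e := fun i j hij => by
    rcases eq_and_eq_or_of_orderedEdge_eq hij with ⟨h1, -⟩ | ⟨h1, h2⟩
    · exact Fin.castSucc_injective _ (hf h1)
    · have := congrArg Fin.val (hf h1)
      have := congrArg Fin.val (hf h2)
      simp only [Fin.val_castSucc, Fin.val_succ] at *
      omega
  calc P {ω | IsPathOn (fun a b => X a b ω = true) k f}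
      ≤ P (⋂ i, X (e i).1.1 (e i).1.2 ⁻¹' {true}) := measure_mono fun ω hω => by
        simpa [hXe] using hω.2
    _ = ∏ i, P (X (e i).1.1 (e i).1.2 ⁻¹' {true}) :=
        (hindep.precomp he).meas_iInter fun i => ⟨{true}, measurableSet_singleton _, rfl⟩
    _ ≤ ∏ i : Fin k, ENNReal.ofReal (M (f i.castSucc) (f i.succ)) :=
        prod_le_prod' fun i _ => by simpa [Set.preimage, hXe] using hp _ _ (hne i)
    _ = ENNReal.ofReal (∏ i : Fin k, M (f i.castSucc) (f i.succ)) :=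
        (ENNReal.ofReal_prod_of_nonneg fun i _ => hM _ _).symm

theorem sum_walks_mul_eq_pow_mulVec {V R : Type*} [Fintype V] [DecidableEq V] [CommSemiring R]
    (M : Matrix V V R) (c : V → R) (a : V) (k : ℕ) :
    ∑ f : Fin (k + 1) → V with f 0 = a,
        (∏ i : Fin k, M (f i.castSucc) (f i.succ)) * c (f (Fin.last k))
      = (M ^ k *ᵥ c) a := by
  induction k generalizing c with
  | zero =>
    rw [sum_filter, ← Equiv.sum_comp (Equiv.funUnique (Fin 1) V).symm]
    simp
  | succ k ih =>
    rw [pow_succ, ← mulVec_mulVec, ← ih, sum_filter, sum_filter,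
      ← Equiv.sum_comp (Fin.snocEquiv fun _ => V), Fintype.sum_prod_type, sum_comm]
    refine sum_congr rfl fun g _ => ?_
    simp only [Fin.snocEquiv_apply, ← Fin.castSucc_zero, Fin.snoc_castSucc, Fin.snoc_last,
      Fin.prod_univ_castSucc, Fin.succ_castSucc, Fin.succ_last]
    split_ifs
    · simp [mulVec, dotProduct, mul_sum, mul_assoc]
    · exact sum_const_zero

theorem integral_sum_indicator_eq {Ω V : Type*} [MeasurableSpace Ω] [Fintype V]
    (μ : Measure Ω) [IsFiniteMeasure μ] {S : Ω → Set V}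
    (hS : ∀ u, MeasurableSet {ω | u ∈ S ω}) (c : V → ℝ) :
    ∫ ω, ∑ u, (S ω).indicator c u ∂μ = ∑ u, μ.real {ω | u ∈ S ω} * c u := by
  have hind (ω : Ω) (u : V) : (S ω).indicator c u = {ω | u ∈ S ω}.indicator (fun _ => c u) ω := by
    simp [Set.indicator_apply]
  simp_rw [hind]
  rw [integral_finsetSum _ fun u _ => (integrable_const (c u)).indicator (hS u)]
  simp [integral_indicator_const _ (hS _)]

section RandomGraph

variable {Ω : Type*} [MeasurableSpace Ω] (μ : Measure Ω) {n : ℕ}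
  {A : Ω → Fin n → Fin n → Prop} {M : Matrix (Fin n) (Fin n) ℝ}

theorem measureReal_mem_nbhd_le (hM : ∀ a b, 0 ≤ M a b)
    (hpath : ∀ k (f : Fin (k + 1) → Fin n),
      μ {ω | IsPathOn (A ω) k f} ≤ ENNReal.ofReal (∏ i : Fin k, M (f i.castSucc) (f i.succ)))
    (ℓ : ℕ) (v u : Fin n) :
    μ.real {ω | u ∈ nbhd (A ω) ℓ v}
      ≤ ∑ k ∈ range (ℓ + 1), ∑ f : Fin (k + 1) → Fin n with f 0 = v ∧ f (Fin.last k) = u,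
          ∏ i : Fin k, M (f i.castSucc) (f i.succ) := by
  have hwt (k : ℕ) (f : Fin (k + 1) → Fin n) : 0 ≤ ∏ i : Fin k, M (f i.castSucc) (f i.succ) :=
    prod_nonneg fun _ _ => hM _ _
  refine ENNReal.toReal_le_of_le_ofReal (sum_nonneg fun k _ => sum_nonneg fun f _ => hwt k f) ?_
  calc μ {ω | u ∈ nbhd (A ω) ℓ v}
      ≤ μ (⋃ k ∈ range (ℓ + 1),
          ⋃ f ∈ ({f : Fin (k + 1) → Fin n | f 0 = v ∧ f (Fin.last k) = u} : Finset _),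
            {ω | IsPathOn (A ω) k f}) := measure_mono fun ω hω => by
        obtain ⟨k, hk, f, hf, hf0, hfu⟩ := exists_isPathOn_of_mem_nbhd hω
        simp only [Set.mem_iUnion, mem_range, mem_filter_univ]
        exact ⟨k, by omega, f, ⟨hf0, hfu⟩, hf⟩
    _ ≤ ∑ k ∈ range (ℓ + 1), ∑ f : Fin (k + 1) → Fin n with f 0 = v ∧ f (Fin.last k) = u,
          μ {ω | IsPathOn (A ω) k f} :=
        (measure_biUnion_finset_le _ _).trans (sum_le_sum fun _ _ => measure_biUnion_finset_le _ _)
    _ ≤ ∑ k ∈ range (ℓ + 1), ∑ f : Fin (k + 1) → Fin n with f 0 = v ∧ f (Fin.last k) = u,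
          ENNReal.ofReal (∏ i : Fin k, M (f i.castSucc) (f i.succ)) := by
        gcongr with k _ f _
        exact hpath k f
    _ = _ := by
        rw [ENNReal.ofReal_sum_of_nonneg fun k _ => sum_nonneg fun f _ => hwt k f]
        exact sum_congr rfl fun k _ => (ENNReal.ofReal_sum_of_nonneg fun f _ => hwt k f).symm

theorem integral_sum_indicator_nbhd_le [IsFiniteMeasure μ]
    (hA : ∀ a b, MeasurableSet {ω | A ω a b}) (hM : ∀ a b, 0 ≤ M a b)
    (hpath : ∀ k (f : Fin (k + 1) → Fin n),
      μ {ω | IsPathOn (A ω) k f} ≤ ENNReal.ofReal (∏ i : Fin k, M (f i.castSucc) (f i.succ)))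
    {c : Fin n → ℝ} (hc : ∀ u, 0 ≤ c u) (ℓ : ℕ) (v : Fin n) :
    ∫ ω, ∑ u, (nbhd (A ω) ℓ v).indicator c u ∂μ ≤ ∑ k ∈ range (ℓ + 1), (M ^ k *ᵥ c) v := by
  rw [integral_sum_indicator_eq μ (measurableSet_mem_nbhd hA ℓ v)]
  calc ∑ u, μ.real {ω | u ∈ nbhd (A ω) ℓ v} * c u
      ≤ ∑ u, (∑ k ∈ range (ℓ + 1), ∑ f : Fin (k + 1) → Fin n with f 0 = v ∧ f (Fin.last k) = u,
          ∏ i : Fin k, M (f i.castSucc) (f i.succ)) * c u := by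
        gcongr with u
        · exact hc u
        · exact measureReal_mem_nbhd_le μ hM hpath ℓ v u
    _ = ∑ k ∈ range (ℓ + 1), ∑ f : Fin (k + 1) → Fin n with f 0 = v,
          (∏ i : Fin k, M (f i.castSucc) (f i.succ)) * c (f (Fin.last k)) := by
        simp_rw [sum_mul]
        rw [sum_comm]
        refine sum_congr rfl fun k _ => ?_
        rw [← sum_fiberwise _ fun f : Fin (k + 1) → Fin n => f (Fin.last k)]
        refine sum_congr rfl fun u _ => ?_
        rw [filter_filter]
        exact sum_congr rfl fun f hf => by rw [(mem_filter.1 hf).2.2]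
    _ = ∑ k ∈ range (ℓ + 1), (M ^ k *ᵥ c) v :=
        sum_congr rfl fun k _ => sum_walks_mul_eq_pow_mulVec M c v k

end RandomGraph

theorem vecMulVec_pow_succ_mulVec {V R : Type*} [Fintype V] [DecidableEq V] [CommSemiring R]
    (x y c : V → R) (k : ℕ) : vecMulVec x y ^ (k + 1) *ᵥ c = ((y ⬝ᵥ x) ^ k * (y ⬝ᵥ c)) • x := by
  induction k with
  | zero => simp [vecMulVec_mulVec]
  | succ k ih =>
    rw [pow_succ', ← mulVec_mulVec, ih, mulVec_smul, vecMulVec_mulVec, op_smul_eq_smul, smul_smul,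
      pow_succ]
    ring_nf

theorem geom_sum_le_add_one_pow {R : Type*} [CommSemiring R] [PartialOrder R] [IsOrderedRing R]
    {x : R} (hx : 0 ≤ x) (m : ℕ) : ∑ k ∈ range (m + 1), x ^ k ≤ (x + 1) ^ m := by
  induction m with
  | zero => simp
  | succ m ih =>
    calc ∑ k ∈ range (m + 2), x ^ k = ∑ k ∈ range (m + 1), x ^ k + x * x ^ m := by
          rw [sum_range_succ, pow_succ']
      _ ≤ (x + 1) ^ m + x * (x + 1) ^ m := by
          gcongr
          exact le_add_of_nonneg_right zero_le_one
      _ = (x + 1) ^ (m + 1) := by ring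

theorem Gam_two_eq_dotProduct (n : ℕ) (θ : ℝ) (W : Fin n → ℝ) :
    Gam n θ W 2 = (fun u => W u / (n * θ)) ⬝ᵥ W := by
  simp only [Gam, dotProduct, Real.rpow_two, sum_div]
  exact sum_congr rfl fun u _ => by ring

theorem kap_two_eq_dotProduct (n : ℕ) (θ : ℝ) (W : Fin n → ℝ) :
    kap n θ W 2
      = (fun u => W u / (n * θ)) ⬝ᵥ fun u => if Real.sqrt (n * θ) < W u then W u else 0 := by
  simp only [kap, dotProduct, sum_div]
  refine sum_congr rfl fun u _ => ?_
  split_ifs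
  · rw [Real.rpow_two]; ring
  · simp

theorem stmt2_general
    (n : ℕ) (θ : ℝ) (hθ : 0 < θ)
    (W : Fin n → ℝ) (hW : ∀ v, 0 < W v)
    {Ω : Type} [MeasurableSpace Ω] (P : Measure Ω) [IsProbabilityMeasure P]
    (X : Fin n → Fin n → Ω → Bool)
    (hmeas : ∀ u v, Measurable (X u v))
    (hsymm : ∀ u v, X u v = X v u)
    (hdist : ∀ u v, u ≠ v →
      P {ω | X u v ω = true} = ENNReal.ofReal (min (W u * W v / (n * θ)) 1))
    (hindep : iIndepFun
      (fun e : {p : Fin n × Fin n // p.1 < p.2} => X e.1.1 e.1.2) P) :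
    ∀ ℓ : ℕ, 1 ≤ ℓ → ∀ v : Fin n,
      ∫ ω, wplus n θ W (nbhd (fun a b => X a b ω = true) ℓ v) ∂P
        ≤ (if Real.sqrt (n * θ) < W v then W v else 0)
          + W v * (Gam n θ W 2 + 1) ^ (ℓ - 1) * kap n θ W 2 := by
  intro ℓ hℓ v
  obtain ⟨m, rfl⟩ : ∃ m, ℓ = m + 1 := ⟨ℓ - 1, by omega⟩
  set c : Fin n → ℝ := fun u => if Real.sqrt (n * θ) < W u then W u else 0
  set y : Fin n → ℝ := fun u => W u / (n * θ)
  have hc (u : Fin n) : 0 ≤ c u := by dsimp only [c]; split_ifs <;> simp [(hW u).le]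
  have hy (u : Fin n) : 0 ≤ y u := div_nonneg (hW u).le (by positivity)
  have hM (a b : Fin n) : 0 ≤ vecMulVec W y a b := mul_nonneg (hW a).le (hy b)
  have hpath := measure_isPathOn_le P hsymm hindep hM fun a b hab =>
    (hdist a b hab).trans_le <| ENNReal.ofReal_le_ofReal <| (min_le_left _ _).trans_eq <|
      mul_div_assoc _ _ _
  have hΓ : Gam n θ W 2 = y ⬝ᵥ W := Gam_two_eq_dotProduct n θ W
  have hκ : kap n θ W 2 = y ⬝ᵥ c := kap_two_eq_dotProduct n θ W
  have hΓ0 : 0 ≤ Gam n θ W 2 := hΓ ▸ sum_nonneg fun u _ => mul_nonneg (hy u) (hW u).le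
  have hκ0 : 0 ≤ kap n θ W 2 := hκ ▸ sum_nonneg fun u _ => mul_nonneg (hy u) (hc u)
  calc ∫ ω, wplus n θ W (nbhd (fun a b => X a b ω = true) (m + 1) v) ∂P
      ≤ ∑ k ∈ range (m + 2), (vecMulVec W y ^ k *ᵥ c) v :=
        integral_sum_indicator_nbhd_le P (fun a b => hmeas a b (measurableSet_singleton true)) hM
          hpath hc (m + 1) v
    _ = c v + W v * kap n θ W 2 * ∑ k ∈ range (m + 1), Gam n θ W 2 ^ k := by
        simp only [sum_range_succ' _ (m + 1), pow_zero, one_mulVec, vecMulVec_pow_succ_mulVec, hΓ,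
          hκ, mul_sum, Pi.smul_apply, smul_eq_mul]
        ring_nf
    _ ≤ c v + W v * kap n θ W 2 * (Gam n θ W 2 + 1) ^ m := by
        gcongr
        · exact mul_nonneg (hW v).le hκ0
        · exact geom_sum_le_add_one_pow hΓ0 m
    _ = _ := by simp only [Nat.add_sub_cancel]; ring

theorem stmt2
    (n : ℕ) (hn : 1 ≤ n) (θ : ℝ) (hθ : 0 < θ)
    (W : Fin n → ℝ) (hW : ∀ v, 0 < W v)
    {Ω : Type} [MeasurableSpace Ω] (P : Measure Ω) [IsProbabilityMeasure P]
    (X : Fin n → Fin n → Ω → Bool)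
    (hmeas : ∀ u v, Measurable (X u v))
    (hsymm : ∀ u v, X u v = X v u)
    (hdiag : ∀ v, X v v = fun _ => false)
    (hdist : ∀ u v, u ≠ v →
      P {ω | X u v ω = true} = ENNReal.ofReal (min (W u * W v / (n * θ)) 1))
    (hindep : iIndepFun
      (fun e : {p : Fin n × Fin n // p.1 < p.2} => X e.1.1 e.1.2) P) :
    ∀ ℓ : ℕ, 1 ≤ ℓ → ∀ v : Fin n,
      ∫ ω, wplus n θ W (nbhd (fun a b => X a b ω = true) ℓ v) ∂P
        ≤ (if Real.sqrt (n * θ) < W v then W v else 0)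
          + W v * (Gam n θ W 2 + 1) ^ (ℓ - 1) * kap n θ W 2 :=
  stmt2_general n θ hθ W hW P X hmeas hsymm hdist hindep
end
end

section
/- For every integer ℓ ≥ 1 and every pair of disjoint vertex sets 𝒰, 𝒱 ⊆ V_n, the probability that there exists a path of length at most ℓ in G_n joining some vertex of 𝒰 to some vertex of 𝒱 is at most (‖𝒰‖·‖𝒱‖/(n·θ))·(1+Γ_{2,n})^{ℓ−1}. -/
open MeasureTheory ProbabilityTheory Real
open scoped ENNReal

noncomputable section
open Classical

/-- iterated matrix-vector products -/
def pathsum (n : ℕ) (M : Fin n → Fin n → ℝ) (B : Fin n → ℝ) : ℕ → Fin n → ℝ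
  | 0, v => B v
  | k+1, v => ∑ u, M v u * pathsum n M B k u

lemma chain_sum {n : ℕ} (M : Fin n → Fin n → ℝ) (B : Fin n → ℝ) :
    ∀ (k : ℕ) (A : Fin n → ℝ),
      (∑ f : Fin (k+1) → Fin n,
        A (f 0) * ((∏ i : Fin k, M (f i.castSucc) (f i.succ)) * B (f (Fin.last k))))
      = ∑ v, A v * pathsum n M B k v := by
  intro k
  induction k with
  | zero =>
      intro A
      rw [← Equiv.sum_comp (Equiv.funUnique (Fin 1) (Fin n)).symm]
      simp [pathsum]
  | succ k ih =>
      intro A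
      rw [← Equiv.sum_comp (Fin.consEquiv (fun _ : Fin (k+2) => Fin n))]
      rw [Fintype.sum_prod_type]
      have hterm : ∀ (x : Fin n) (t : Fin (k+1) → Fin n),
          A ((Fin.consEquiv (fun _ : Fin (k+2) => Fin n)) (x, t) 0) *
            ((∏ i : Fin (k+1),
              M ((Fin.consEquiv (fun _ : Fin (k+2) => Fin n)) (x, t) i.castSucc)
                ((Fin.consEquiv (fun _ : Fin (k+2) => Fin n)) (x, t) i.succ)) *
              B ((Fin.consEquiv (fun _ : Fin (k+2) => Fin n)) (x, t) (Fin.last (k+1))))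
          = (A x * M x (t 0)) *
              ((∏ i : Fin k, M (t i.castSucc) (t i.succ)) * B (t (Fin.last k))) := by
        intro x t
        simp only [Fin.consEquiv_apply, Fin.prod_univ_succ, ← Fin.succ_castSucc,
          ← Fin.succ_last, Fin.cons_succ, Fin.cons_zero, Fin.castSucc_zero]
        ring
      rw [Finset.sum_congr rfl (fun x _ => Finset.sum_congr rfl (fun t _ => hterm x t))]
      have : ∀ x : Fin n,
          (∑ t : Fin (k+1) → Fin n, (A x * M x (t 0)) *
            ((∏ i : Fin k, M (t i.castSucc) (t i.succ)) * B (t (Fin.last k))))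
          = A x * pathsum n M B (k+1) x := by
        intro x
        rw [ih (fun w => A x * M x w)]
        show _ = A x * ∑ u, M x u * pathsum n M B k u
        rw [Finset.mul_sum]
        exact Finset.sum_congr rfl fun v _ => by ring
      rw [Finset.sum_congr rfl (fun x _ => this x)]

lemma sumW_pathsum {n : ℕ} (W : Fin n → ℝ) (c : ℝ) (V : Set (Fin n)) :
    ∀ k : ℕ, (∑ v, W v * pathsum n (fun a b => W a * W b / c)
        (Set.indicator V fun _ => (1:ℝ)) k v)
      = (∑ v, Set.indicator V W v) * ((∑ v, W v * W v) / c) ^ k := by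
  intro k
  induction k with
  | zero =>
      simp only [pathsum, pow_zero, mul_one]
      refine Finset.sum_congr rfl fun v _ => ?_
      by_cases h : v ∈ V <;> simp [Set.indicator_apply, h]
  | succ k ih =>
      show (∑ v, W v * ∑ u, (W v * W u / c) * _) = _
      have key : ∀ v : Fin n, W v * (∑ u, (W v * W u / c) *
          pathsum n (fun a b => W a * W b / c) (Set.indicator V fun _ => (1:ℝ)) k u)
          = (W v * W v) * ((∑ u, W u * pathsum n (fun a b => W a * W b / c)
              (Set.indicator V fun _ => (1:ℝ)) k u) / c) := by
        intro v
        rw [Finset.mul_sum, Finset.sum_div, Finset.mul_sum]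
        exact Finset.sum_congr rfl fun u _ => by ring
      rw [Finset.sum_congr rfl fun v _ => key v, ← Finset.sum_mul, ih]
      ring

lemma indU_pathsum {n : ℕ} (W : Fin n → ℝ) (c : ℝ) (U V : Set (Fin n)) (k : ℕ) :
    (∑ v, Set.indicator U (fun _ => (1:ℝ)) v *
      pathsum n (fun a b => W a * W b / c) (Set.indicator V fun _ => (1:ℝ)) (k+1) v)
    = (∑ v, Set.indicator U W v) * (∑ v, Set.indicator V W v) / c *
        ((∑ v, W v * W v) / c) ^ k := by
  have key : ∀ v : Fin n, Set.indicator U (fun _ => (1:ℝ)) v *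
      pathsum n (fun a b => W a * W b / c) (Set.indicator V fun _ => (1:ℝ)) (k+1) v
      = Set.indicator U W v * ((∑ u, W u * pathsum n (fun a b => W a * W b / c)
          (Set.indicator V fun _ => (1:ℝ)) k u) / c) := by
    intro v
    show Set.indicator U (fun _ => (1:ℝ)) v * (∑ u, (W v * W u / c) * _) = _
    rw [Finset.mul_sum, Finset.sum_div, Finset.mul_sum]
    refine Finset.sum_congr rfl fun u _ => ?_
    by_cases h : v ∈ U <;> simp only [Set.indicator_apply, h, if_true, if_false] <;> ring
  rw [Finset.sum_congr rfl fun v _ => key v, ← Finset.sum_mul, sumW_pathsum]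
  ring

lemma geom_le_pow {x : ℝ} (hx : 0 ≤ x) :
    ∀ m : ℕ, (∑ j ∈ Finset.range (m+1), x ^ j) ≤ (1 + x) ^ m := by
  intro m
  induction m with
  | zero => simp
  | succ m ih =>
      have h1 : (1:ℝ) ≤ (1+x)^m := one_le_pow₀ (by linarith)
      calc (∑ j ∈ Finset.range (m+2), x ^ j)
          = x * (∑ j ∈ Finset.range (m+1), x ^ j) + 1 := by
            rw [Finset.sum_range_succ']
            simp [pow_succ', Finset.mul_sum]
        _ ≤ x * (1+x)^m + 1 := by
            have := mul_le_mul_of_nonneg_left ih hx; linarith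
        _ ≤ (1+x)^(m+1) := by rw [pow_succ]; nlinarith

lemma path_prob {n : ℕ} {Ω : Type} [MeasurableSpace Ω] (P : Measure Ω)
    (X : Fin n → Fin n → Ω → Bool)
    (hsymm : ∀ u v, X u v = X v u)
    (hindep : iIndepFun
      (fun e : {p : Fin n × Fin n // p.1 < p.2} => X e.1.1 e.1.2) P)
    (q : Fin n → Fin n → ENNReal)
    (hq : ∀ u v, u ≠ v → P {ω | X u v ω = true} = q u v)
    (k : ℕ) (f : Fin (k+1) → Fin n) (hf : Function.Injective f) :
    P (⋂ i : Fin k, {ω | X (f i.castSucc) (f i.succ) ω = true})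
      = ∏ i : Fin k, q (f i.castSucc) (f i.succ) := by
  have hne : ∀ i : Fin k, f i.castSucc ≠ f i.succ := by
    intro i h
    exact absurd (hf h) (show i.castSucc < i.succ from Fin.castSucc_lt_succ).ne
  set e : Fin k → {p : Fin n × Fin n // p.1 < p.2} := fun i =>
    if h : f i.castSucc < f i.succ then ⟨(f i.castSucc, f i.succ), h⟩
    else ⟨(f i.succ, f i.castSucc), (hne i).lt_or_gt.resolve_left h⟩ with he_def
  have hXe : ∀ i, X (e i).1.1 (e i).1.2 = X (f i.castSucc) (f i.succ) := by
    intro i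
    rw [he_def]
    by_cases h : f i.castSucc < f i.succ
    · simp only [dif_pos h]
    · simp only [dif_neg h]
      exact hsymm _ _
  have he_inj : Function.Injective e := by
    intro i j h
    rw [he_def] at h
    simp only at h
    split_ifs at h <;>
    · simp only [Subtype.mk.injEq, Prod.mk.injEq] at h
      have a := congrArg Fin.val (hf h.1)
      have b := congrArg Fin.val (hf h.2)
      simp only [Fin.coe_castSucc, Fin.val_succ] at a b
      exact Fin.ext (by omega)
  have hset : (⋂ j ∈ Finset.univ.image e,
        (fun e' : {p : Fin n × Fin n // p.1 < p.2} => X e'.1.1 e'.1.2) j ⁻¹' {true})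
      = ⋂ i : Fin k, {ω | X (f i.castSucc) (f i.succ) ω = true} := by
    ext ω
    simp only [Set.mem_iInter, Set.mem_preimage, Set.mem_singleton_iff, Finset.mem_image,
      Finset.mem_univ, true_and, Set.mem_setOf_eq]
    constructor
    · intro h i
      rw [← hXe i]
      exact h (e i) ⟨i, rfl⟩
    · rintro h j ⟨i, rfl⟩
      have := h i
      rw [← hXe i] at this
      exact this
  rw [← hset,
    hindep.measure_inter_preimage_eq_mul (Finset.univ.image e)
      (sets := fun _ => {true}) (fun _ _ => measurableSet_singleton true),
    Finset.prod_image (fun i _ j _ h => he_inj h)]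
  refine Finset.prod_congr rfl fun i _ => ?_
  have : (fun e' : {p : Fin n × Fin n // p.1 < p.2} => X e'.1.1 e'.1.2) (e i) ⁻¹' {true}
      = {ω | X (f i.castSucc) (f i.succ) ω = true} := by
    ext ω
    simp [hXe i]
  rw [this]
  exact hq _ _ (hne i)

set_option maxHeartbeats 1000000 in
theorem stmt7
    (n : ℕ) (hn : 1 ≤ n) (θ : ℝ) (hθ : 0 < θ)
    (W : Fin n → ℝ) (hW : ∀ v, 0 < W v)
    {Ω : Type} [MeasurableSpace Ω] (P : Measure Ω) [IsProbabilityMeasure P]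
    (X : Fin n → Fin n → Ω → Bool)
    (hmeas : ∀ u v, Measurable (X u v))
    (hsymm : ∀ u v, X u v = X v u)
    (hdiag : ∀ v, X v v = fun _ => false)
    (hdist : ∀ u v, u ≠ v →
      P {ω | X u v ω = true} = ENNReal.ofReal (min (W u * W v / (n * θ)) 1))
    (hindep : iIndepFun
      (fun e : {p : Fin n × Fin n // p.1 < p.2} => X e.1.1 e.1.2) P) :
    ∀ ℓ : ℕ, 1 ≤ ℓ → ∀ 𝒰 𝒱 : Set (Fin n), Disjoint 𝒰 𝒱 →
      P {ω | ∃ k, k ≤ ℓ ∧ ∃ f : Fin (k + 1) → Fin n,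
          IsPathOn (fun a b => X a b ω = true) k f ∧ f 0 ∈ 𝒰 ∧ f (Fin.last k) ∈ 𝒱}
        ≤ ENNReal.ofReal
            (wnorm W 1 𝒰 * wnorm W 1 𝒱 / (n * θ) * (1 + Gam n θ W 2) ^ (ℓ - 1)) := by
  intro ℓ hℓ 𝒰 𝒱 hdisj
  have hnpos : (0:ℝ) < (n:ℝ) * θ := by
    have : (0:ℝ) < (n:ℝ) := by exact_mod_cast Nat.lt_of_lt_of_le Nat.zero_lt_one hn
    positivity
  have hWnn : ∀ v, 0 ≤ W v := fun v => (hW v).le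
  set Γ : ℝ := (∑ v, W v * W v) / ((n:ℝ) * θ) with hΓ_def
  set C : ℝ := (∑ v, Set.indicator 𝒰 W v) * (∑ v, Set.indicator 𝒱 W v) / ((n:ℝ) * θ)
    with hC_def
  have hΓnn : 0 ≤ Γ :=
    div_nonneg (Finset.sum_nonneg fun v _ => mul_self_nonneg _) hnpos.le
  have hCnn : 0 ≤ C := by
    refine div_nonneg (mul_nonneg ?_ ?_) hnpos.le <;>
      exact Finset.sum_nonneg fun v _ => Set.indicator_nonneg (fun u _ => hWnn u) v
  set E : ℕ → Set Ω := fun k => {ω | ∃ f : Fin (k+1) → Fin n,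
    IsPathOn (fun a b => X a b ω = true) k f ∧ f 0 ∈ 𝒰 ∧ f (Fin.last k) ∈ 𝒱} with hE_def
  have hU : {ω | ∃ k, k ≤ ℓ ∧ ∃ f : Fin (k + 1) → Fin n,
      IsPathOn (fun a b => X a b ω = true) k f ∧ f 0 ∈ 𝒰 ∧ f (Fin.last k) ∈ 𝒱}
      = ⋃ k ∈ Finset.range (ℓ+1), E k := by
    ext ω
    simp [hE_def, Nat.lt_succ_iff]
  have hE0 : E 0 = ∅ := by
    rw [Set.eq_empty_iff_forall_notMem]
    rintro ω ⟨f, _, h0, hl⟩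
    exact Set.disjoint_left.mp hdisj h0 (show f 0 ∈ 𝒱 from hl)
  -- the per-length bound
  have hEk : ∀ m : ℕ, P (E (m+1)) ≤ ENNReal.ofReal (C * Γ ^ m) := by
    intro m
    set S : Finset (Fin (m+2) → Fin n) := Finset.univ.filter
      (fun f => Function.Injective f ∧ f 0 ∈ 𝒰 ∧ f (Fin.last (m+1)) ∈ 𝒱) with hS_def
    set A : (Fin (m+2) → Fin n) → Set Ω := fun f =>
      ⋂ i : Fin (m+1), {ω | X (f i.castSucc) (f i.succ) ω = true} with hA_def
    have hsub : E (m+1) ⊆ ⋃ f ∈ S, A f := by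
      rintro ω ⟨f, ⟨hinj, hpath⟩, h0, hl⟩
      exact Set.mem_biUnion (Finset.mem_filter.mpr ⟨Finset.mem_univ f, hinj, h0, hl⟩)
        (Set.mem_iInter.mpr hpath)
    have hPA : ∀ f ∈ S, P (A f) = ENNReal.ofReal
        (∏ i : Fin (m+1), min (W (f i.castSucc) * W (f i.succ) / ((n:ℝ)*θ)) 1) := by
      intro f hf
      have hinj : Function.Injective f := by
        simp only [hS_def, Finset.mem_filter] at hf
        exact hf.2.1
      rw [hA_def]
      rw [path_prob P X hsymm hindep
        (fun u v => ENNReal.ofReal (min (W u * W v / ((n:ℝ)*θ)) 1)) hdist (m+1) f hinj]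
      rw [← ENNReal.ofReal_prod_of_nonneg]
      intro i _
      exact le_min (div_nonneg (mul_nonneg (hWnn _) (hWnn _)) hnpos.le) zero_le_one
    have hreal : (∑ f ∈ S, ∏ i : Fin (m+1),
        min (W (f i.castSucc) * W (f i.succ) / ((n:ℝ)*θ)) 1) ≤ C * Γ ^ m := by
      set g : (Fin (m+2) → Fin n) → ℝ := fun f =>
        Set.indicator 𝒰 (fun _ => (1:ℝ)) (f 0) *
          ((∏ i : Fin (m+1), W (f i.castSucc) * W (f i.succ) / ((n:ℝ)*θ)) *
            Set.indicator 𝒱 (fun _ => (1:ℝ)) (f (Fin.last (m+1)))) with hg_def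
      have hgnn : ∀ f, 0 ≤ g f := by
        intro f
        refine mul_nonneg (Set.indicator_nonneg (fun _ _ => zero_le_one) _)
          (mul_nonneg (Finset.prod_nonneg fun i _ =>
            div_nonneg (mul_nonneg (hWnn _) (hWnn _)) hnpos.le)
            (Set.indicator_nonneg (fun _ _ => zero_le_one) _))
      calc (∑ f ∈ S, ∏ i : Fin (m+1),
            min (W (f i.castSucc) * W (f i.succ) / ((n:ℝ)*θ)) 1)
          ≤ ∑ f ∈ S, g f := by
            refine Finset.sum_le_sum fun f hf => ?_
            simp only [hS_def, Finset.mem_filter] at hf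
            rw [hg_def]
            simp only [Set.indicator_of_mem hf.2.2.1, Set.indicator_of_mem hf.2.2.2,
              one_mul, mul_one]
            refine Finset.prod_le_prod (fun i _ => le_min
              (div_nonneg (mul_nonneg (hWnn _) (hWnn _)) hnpos.le) zero_le_one)
              (fun i _ => min_le_left _ _)
        _ ≤ ∑ f : Fin (m+2) → Fin n, g f :=
            Finset.sum_le_sum_of_subset_of_nonneg (Finset.subset_univ S)
              (fun f _ _ => hgnn f)
        _ = ∑ v, Set.indicator 𝒰 (fun _ => (1:ℝ)) v *
              pathsum n (fun a b => W a * W b / ((n:ℝ)*θ))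
                (Set.indicator 𝒱 fun _ => (1:ℝ)) (m+1) v :=
          by
            simp only [hg_def]
            exact chain_sum (fun a b => W a * W b / ((n:ℝ)*θ))
              (Set.indicator 𝒱 fun _ => (1:ℝ)) (m+1) (Set.indicator 𝒰 fun _ => (1:ℝ))
        _ = C * Γ ^ m := by rw [indU_pathsum, hC_def, hΓ_def]
    calc P (E (m+1)) ≤ P (⋃ f ∈ S, A f) := measure_mono hsub
      _ ≤ ∑ f ∈ S, P (A f) := measure_biUnion_finset_le S A
      _ = ENNReal.ofReal (∑ f ∈ S, ∏ i : Fin (m+1),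
            min (W (f i.castSucc) * W (f i.succ) / ((n:ℝ)*θ)) 1) := by
          rw [ENNReal.ofReal_sum_of_nonneg (fun f _ => Finset.prod_nonneg fun i _ =>
            le_min (div_nonneg (mul_nonneg (hWnn _) (hWnn _)) hnpos.le) zero_le_one)]
          exact Finset.sum_congr rfl hPA
      _ ≤ ENNReal.ofReal (C * Γ ^ m) := ENNReal.ofReal_le_ofReal hreal
  -- assembling
  have hwnorm : ∀ U : Set (Fin n), wnorm W 1 U = ∑ v, Set.indicator U W v := by
    intro U
    refine Finset.sum_congr rfl fun v _ => ?_
    by_cases h : v ∈ U <;> simp [wnorm, Set.indicator_apply, h]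
  have hGam : Gam n θ W 2 = Γ := by
    rw [hΓ_def, Gam]
    congr 1
    refine Finset.sum_congr rfl fun v _ => ?_
    rw [show (2:ℝ) = ((2:ℕ):ℝ) by norm_num, Real.rpow_natCast]
    ring
  have hfin : (∑ k ∈ Finset.range (ℓ+1), if k = 0 then (0:ℝ) else C * Γ ^ (k-1))
      ≤ C * (1 + Γ) ^ (ℓ - 1) := by
    rw [Finset.sum_range_succ']
    simp only [Nat.succ_ne_zero, if_false, if_true, Nat.add_sub_cancel, add_zero]
    rw [← Finset.mul_sum]
    refine mul_le_mul_of_nonneg_left ?_ hCnn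
    obtain ⟨m, rfl⟩ : ∃ m, ℓ = m + 1 := ⟨ℓ - 1, (Nat.succ_pred_eq_of_pos hℓ).symm⟩
    simpa using geom_le_pow hΓnn m
  rw [hU]
  calc P (⋃ k ∈ Finset.range (ℓ+1), E k)
      ≤ ∑ k ∈ Finset.range (ℓ+1), P (E k) := measure_biUnion_finset_le _ _
    _ ≤ ∑ k ∈ Finset.range (ℓ+1),
          ENNReal.ofReal (if k = 0 then (0:ℝ) else C * Γ ^ (k-1)) := by
        refine Finset.sum_le_sum fun k _ => ?_
        match k with
        | 0 => simp [hE0]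
        | (m+1) => simpa using hEk m
    _ = ENNReal.ofReal (∑ k ∈ Finset.range (ℓ+1),
          if k = 0 then (0:ℝ) else C * Γ ^ (k-1)) := by
        rw [ENNReal.ofReal_sum_of_nonneg]
        intro k _
        split
        · exact le_rfl
        · exact mul_nonneg hCnn (pow_nonneg hΓnn _)
    _ ≤ ENNReal.ofReal (wnorm W 1 𝒰 * wnorm W 1 𝒱 / (n * θ) * (1 + Gam n θ W 2) ^ (ℓ - 1)) := by
        refine ENNReal.ofReal_le_ofReal ?_
        rw [hwnorm, hwnorm, hGam]
        calc _ ≤ C * (1 + Γ) ^ (ℓ - 1) := hfin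
          _ = _ := by rw [hC_def]
end
end
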